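/- Let ω_i, ω_ℓ, ω_m be mutually distinct real numbers, let ω_q be any real number, let N ≥ 3 be a real number, and let σ, τ : ℝ → ℂ be continuous with |σ(θ)| ≤ C₁ · ⟨θ⟩^{−N} and |τ(θ)| ≤ C₁ · ⟨θ⟩^{−N} for all θ ∈ ℝ. Then there exists a constant C₂ > 0, depending only on C₁, N and the ω's, such that for all θ₀ ∈ ℝ and all ξ_d ≥ 0: ∫_{ξ_d}^{+∞} ∫_{s}^{+∞} |σ(θ₀ + ω_q ξ_d + (ω_i − ω_q)s + (ω_ℓ − ω_i)r) · τ(θ₀ + ω_q ξ_d + (ω_i − ω_q)s + (ω_m − ω_i)r)| dr ds ≤ C₂ · ⟨ξ_d⟩^{−N+2}. -/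

import Mathlib

/-!
The two arguments of `σ` and `τ` differ by `(ωl - ωm) r`, so Peetre's inequality
`⟨a - b⟩ ≤ √2 ⟨a⟩⟨b⟩` bounds the integrand by a multiple of `(1 + r)^(-N)`, uniformly in `θ₀`
and `s`. Integrating this over `r > s` and then over `s > ξd` loses one power each time,
leaving `(1 + ξd)^(2-N) ≤ ⟨ξd⟩^(2-N)` up to a constant.
-/

open MeasureTheory Set
open scoped ENNReal

lemma lintegral_Ioi_one_add_rpow_neg {p c : ℝ} (hp : 1 < p) (hc : -1 < c) :
    ∫⁻ r in Ioi c, ENNReal.ofReal ((1 + r) ^ (-p)) =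
      ENNReal.ofReal ((p - 1)⁻¹ * (1 + c) ^ (-(p - 1))) := by
  have hc' : 0 < 1 + c := by linarith
  have hshift : ∫⁻ r in Ioi c, ENNReal.ofReal ((1 + r) ^ (-p)) =
      ∫⁻ y in Ioi (1 + c), ENNReal.ofReal (y ^ (-p)) := by
    rw [← (measurePreserving_add_left volume 1).setLIntegral_comp_preimage_emb
      (measurableEmbedding_addLeft 1) (fun y => ENNReal.ofReal (y ^ (-p))),
      preimage_const_add_Ioi, add_sub_cancel_left]
  have hnonneg : 0 ≤ᵐ[volume.restrict (Ioi (1 + c))] fun y : ℝ => y ^ (-p) :=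
    (ae_restrict_mem measurableSet_Ioi).mono fun y hy => Real.rpow_nonneg (hc'.trans hy).le _
  rw [hshift, ← ofReal_integral_eq_lintegral_ofReal
    (integrableOn_Ioi_rpow_of_lt (by linarith) hc') hnonneg,
    integral_Ioi_rpow_of_lt (by linarith) hc']
  have : p - 1 ≠ 0 := by linarith
  rw [show -p + 1 = -(p - 1) by ring]
  field_simp

lemma lintegral_Ioi_lintegral_Ioi_one_add_rpow_neg {p c : ℝ} (hp : 2 < p) (hc : -1 < c) :
    ∫⁻ s in Ioi c, ∫⁻ r in Ioi s, ENNReal.ofReal ((1 + r) ^ (-p)) =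
      ENNReal.ofReal (((p - 1) * (p - 2))⁻¹ * (1 + c) ^ (-(p - 2))) := by
  have hp1 : 0 ≤ (p - 1)⁻¹ := by rw [inv_nonneg]; linarith
  calc _ = ∫⁻ s in Ioi c, ENNReal.ofReal (p - 1)⁻¹ * ENNReal.ofReal ((1 + s) ^ (-(p - 1))) :=
        setLIntegral_congr_fun measurableSet_Ioi fun s hs => by
          rw [lintegral_Ioi_one_add_rpow_neg (by linarith) (hc.trans hs), ENNReal.ofReal_mul hp1]
    _ = _ := by
        rw [lintegral_const_mul' _ _ ENNReal.ofReal_ne_top,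
          lintegral_Ioi_one_add_rpow_neg (by linarith) hc, ← ENNReal.ofReal_mul hp1,
          show p - 1 - 1 = p - 2 by ring, mul_inv]
        ring_nf

lemma one_add_sq_sub_le (a b : ℝ) : 1 + (a - b) ^ 2 ≤ 2 * ((1 + a ^ 2) * (1 + b ^ 2)) := by
  nlinarith [sq_nonneg (a + b), sq_nonneg (a * b)]

lemma min_one_abs_div_two_mul_le_sqrt_mul_sqrt {a b δ r : ℝ} (hab : a - b = δ * r) :
    min 1 |δ| / 2 * (1 + r) ≤ √(1 + a ^ 2) * √(1 + b ^ 2) := by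
  set m := min 1 |δ|
  have hm0 : 0 ≤ m := le_min zero_le_one (abs_nonneg δ)
  have hm1 : m ^ 2 ≤ 1 := pow_le_one₀ hm0 (min_le_left _ _)
  have hmδ : m ^ 2 ≤ δ ^ 2 := by
    rw [← sq_abs δ]; exact pow_le_pow_left₀ hm0 (min_le_right _ _) 2
  have hmr : m ^ 2 * (1 + r ^ 2) ≤ 1 + (a - b) ^ 2 := by
    rw [hab, mul_pow]; nlinarith [sq_nonneg r]
  rw [← Real.sqrt_mul (by positivity)]
  refine (le_abs_self _).trans (Real.abs_le_sqrt ?_)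
  nlinarith [one_add_sq_sub_le a b, sq_nonneg (1 - r), sq_nonneg m]

lemma norm_mul_le_of_rpow_decay {E : Type*} [SeminormedRing E] {σ τ : ℝ → E} {C N δ a b r : ℝ}
    (hσ : ∀ θ, ‖σ θ‖ ≤ C * √(1 + θ ^ 2) ^ (-N)) (hτ : ∀ θ, ‖τ θ‖ ≤ C * √(1 + θ ^ 2) ^ (-N))
    (hN : 0 ≤ N) (hδ : δ ≠ 0) (hab : a - b = δ * r) (hr : -1 < r) :
    ‖σ a * τ b‖ ≤ C ^ 2 * (min 1 |δ| / 2) ^ (-N) * (1 + r) ^ (-N) := by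
  have hm : 0 < min 1 |δ| / 2 := by positivity
  calc ‖σ a * τ b‖ ≤ ‖σ a‖ * ‖τ b‖ := norm_mul_le _ _
    _ ≤ (C * √(1 + a ^ 2) ^ (-N)) * (C * √(1 + b ^ 2) ^ (-N)) :=
        mul_le_mul (hσ a) (hτ b) (norm_nonneg _) ((norm_nonneg _).trans (hσ a))
    _ = C ^ 2 * (√(1 + a ^ 2) * √(1 + b ^ 2)) ^ (-N) := by
        rw [Real.mul_rpow (by positivity) (by positivity)]; ring
    _ ≤ C ^ 2 * (min 1 |δ| / 2 * (1 + r)) ^ (-N) :=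
        mul_le_mul_of_nonneg_left (Real.rpow_le_rpow_of_nonpos (mul_pos hm (by linarith))
          (min_one_abs_div_two_mul_le_sqrt_mul_sqrt hab) (by linarith)) (sq_nonneg C)
    _ = C ^ 2 * (min 1 |δ| / 2) ^ (-N) * (1 + r) ^ (-N) := by
        rw [Real.mul_rpow hm.le (by linarith)]; ring

lemma lintegral_Ioi_lintegral_Ioi_norm_mul_le {E : Type*} [SeminormedRing E] {σ τ : ℝ → E}
    {C N : ℝ} (hσ : ∀ θ, ‖σ θ‖ ≤ C * √(1 + θ ^ 2) ^ (-N))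
    (hτ : ∀ θ, ‖τ θ‖ ≤ C * √(1 + θ ^ 2) ^ (-N)) (hN : 2 < N) {u α β γ c : ℝ} (hβγ : β ≠ γ)
    (hc : -1 < c) :
    ∫⁻ s in Ioi c, ∫⁻ r in Ioi s, (‖σ (u + α * s + β * r) * τ (u + α * s + γ * r)‖₊ : ℝ≥0∞) ≤
      ENNReal.ofReal (C ^ 2 * (min 1 |β - γ| / 2) ^ (-N) * ((N - 1) * (N - 2))⁻¹ *
        (1 + c) ^ (-(N - 2))) := by
  set K := C ^ 2 * (min 1 |β - γ| / 2) ^ (-N)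
  have hK : 0 ≤ K := by positivity
  calc _ ≤ ∫⁻ s in Ioi c, ∫⁻ r in Ioi s, ENNReal.ofReal K * ENNReal.ofReal ((1 + r) ^ (-N)) :=
        setLIntegral_mono' measurableSet_Ioi fun s hs =>
          setLIntegral_mono' measurableSet_Ioi fun r hr => by
            rw [← ENNReal.ofReal_mul hK, ← ENNReal.ofReal_coe_nnreal, coe_nnnorm]
            exact ENNReal.ofReal_le_ofReal <| norm_mul_le_of_rpow_decay hσ hτ (by linarith)
              (sub_ne_zero.2 hβγ) (by ring) (by linarith [hs.out, hr.out])
    _ = ENNReal.ofReal K * ∫⁻ s in Ioi c, ∫⁻ r in Ioi s, ENNReal.ofReal ((1 + r) ^ (-N)) := by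
        simp only [lintegral_const_mul' _ _ ENNReal.ofReal_ne_top]
    _ = _ := by
        rw [lintegral_Ioi_lintegral_Ioi_one_add_rpow_neg hN hc, ← ENNReal.ofReal_mul hK, ← mul_assoc]

lemma sqrt_one_add_sq_le_one_add {x : ℝ} (hx : 0 ≤ x) : √(1 + x ^ 2) ≤ 1 + x :=
  Real.sqrt_le_iff.2 ⟨by linarith, by nlinarith⟩

theorem stmt7_general (ωi ωl ωm ωq : ℝ) (h3 : ωl ≠ ωm)
    (N : ℝ) (hN : 3 ≤ N) (C₁ : ℝ) :
    ∃ C₂ > (0 : ℝ), ∀ σ τ : ℝ → ℂ, Continuous σ → Continuous τ →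
      (∀ θ : ℝ, ‖σ θ‖ ≤ C₁ * (((1 + θ ^ 2) ^ (1/2 : ℝ)) ^ (-N))) →
      (∀ θ : ℝ, ‖τ θ‖ ≤ C₁ * (((1 + θ ^ 2) ^ (1/2 : ℝ)) ^ (-N))) →
      ∀ θ₀ ξd : ℝ, 0 ≤ ξd →
        (∫⁻ s in Set.Ioi ξd, ∫⁻ r in Set.Ioi s,
            (‖σ (θ₀ + ωq * ξd + (ωi - ωq) * s + (ωl - ωi) * r) *
              τ (θ₀ + ωq * ξd + (ωi - ωq) * s + (ωm - ωi) * r)‖₊ : ℝ≥0∞)) ≤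
          ENNReal.ofReal (C₂ * (((1 + ξd ^ 2) ^ (1/2 : ℝ)) ^ (-N + 2))) := by
  have hδ : ωl - ωi - (ωm - ωi) ≠ 0 := fun h => h3 (by linarith)
  have hM : 0 < (min 1 |ωl - ωi - (ωm - ωi)| / 2) ^ (-N) := Real.rpow_pos_of_pos (by positivity) _
  have hP : 0 < ((N - 1) * (N - 2))⁻¹ := inv_pos.2 (by nlinarith)
  refine ⟨(C₁ ^ 2 + 1) * (min 1 |ωl - ωi - (ωm - ωi)| / 2) ^ (-N) * ((N - 1) * (N - 2))⁻¹,
    by positivity, fun σ τ _ _ hσ hτ θ₀ ξd hξd => ?_⟩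
  simp only [← Real.sqrt_eq_rpow] at hσ hτ ⊢
  have hξd_decay : (1 + ξd) ^ (-(N - 2)) ≤ √(1 + ξd ^ 2) ^ (-N + 2) := by
    rw [show -N + 2 = -(N - 2) by ring]
    exact Real.rpow_le_rpow_of_nonpos (by positivity) (sqrt_one_add_sq_le_one_add hξd)
      (by linarith)
  refine (lintegral_Ioi_lintegral_Ioi_norm_mul_le hσ hτ (by linarith) (sub_ne_zero.1 hδ)
    (by linarith)).trans (ENNReal.ofReal_le_ofReal ?_)
  gcongr
  linarith

theorem stmt7 (ωi ωl ωm ωq : ℝ) (h1 : ωi ≠ ωl) (h2 : ωi ≠ ωm) (h3 : ωl ≠ ωm)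
    (N : ℝ) (hN : 3 ≤ N) (C₁ : ℝ) :
    ∃ C₂ > (0 : ℝ), ∀ σ τ : ℝ → ℂ, Continuous σ → Continuous τ →
      (∀ θ : ℝ, ‖σ θ‖ ≤ C₁ * (((1 + θ ^ 2) ^ (1/2 : ℝ)) ^ (-N))) →
      (∀ θ : ℝ, ‖τ θ‖ ≤ C₁ * (((1 + θ ^ 2) ^ (1/2 : ℝ)) ^ (-N))) →
      ∀ θ₀ ξd : ℝ, 0 ≤ ξd →
        (∫⁻ s in Set.Ioi ξd, ∫⁻ r in Set.Ioi s,
            (‖σ (θ₀ + ωq * ξd + (ωi - ωq) * s + (ωl - ωi) * r) *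
              τ (θ₀ + ωq * ξd + (ωi - ωq) * s + (ωm - ωi) * r)‖₊ : ℝ≥0∞)) ≤
          ENNReal.ofReal (C₂ * (((1 + ξd ^ 2) ^ (1/2 : ℝ)) ^ (-N + 2))) :=
  stmt7_general ωi ωl ωm ωq h3 N hN C₁
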